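/- Norm scalings of the finite-difference Hamiltonians and their commutators: in the finite-difference setting (with V 1-periodic and twice continuously differentiable), for every n ≥ 3: ‖H1‖ ≤ 4n², ‖D1‖ ≤ 2n, ‖H2‖ ≤ sup_{x∈[0,1]} |V(x)|, ‖[H1,H2]‖ ≤ 2n · sup_{x∈[0,1]} |V'(x)|, ‖[H2,[H2,H1]]‖ ≤ 4n · sup_{x∈[0,1]} |V(x)| · sup_{x∈[0,1]} |V'(x)|, and ‖[H1,[H1,H2]]‖ ≤ 4n² · sup_{x∈[0,1]} |V''(x)|, where ‖·‖ is the spectral (operator 2-) norm. -/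

import Mathlib

open scoped Matrix.Norms.L2Operator
open Matrix

noncomputable section

/-- Square `n × n` complex matrices. -/
abbrev Mat (n : ℕ) := Matrix (Fin n) (Fin n) ℂ

/-- The commutator `[A,B] = AB - BA`. -/
def matComm {n : ℕ} (A B : Mat n) : Mat n := A * B - B * A

/-- The `n×n` periodic central finite-difference discretization of `-Δ` on `[0,1]`:
`(H1)_{kk} = 2n²`, `(H1)_{k,k+1 mod n} = (H1)_{k,k-1 mod n} = -n²`, all other entries `0`. -/
noncomputable def fdH1 (n : ℕ) : Mat n :=
  Matrix.of fun k l : Fin n =>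
    if (l : ℕ) = (k : ℕ) then 2 * (n : ℂ)^2
    else if (l : ℕ) = ((k : ℕ) + 1) % n ∨ (l : ℕ) = ((k : ℕ) + n - 1) % n then -(n : ℂ)^2
    else 0

/-- The diagonal potential matrix `H2 = diag(V(0), V(1/n), …, V((n-1)/n))`. -/
noncomputable def fdH2 (n : ℕ) (V : ℝ → ℝ) : Mat n :=
  Matrix.diagonal fun k : Fin n => ((V (((k : ℕ) : ℝ) / (n : ℝ))) : ℂ)

/-- The difference matrix: `(D1)_{kk} = -n`, `(D1)_{k,k-1 mod n} = n`, all other entries `0`. -/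
noncomputable def fdD1 (n : ℕ) : Mat n :=
  Matrix.of fun k l : Fin n =>
    if (l : ℕ) = (k : ℕ) then -(n : ℂ)
    else if (l : ℕ) = ((k : ℕ) + n - 1) % n then (n : ℂ)
    else 0

/-!
Write `S a` for the cyclic shift by `a` on `Fin n` and `D g` for the diagonal matrix of `g`.
Then `H1 = n² ∑_{a = ±1} (1 - S a)`, `D1 = -n (1 - S (-1))` and `H2 = D d` with `d k = V (k / n)`,
and `[S a, D g * S b] = D (Δ_[a] g) * S (a + b)` for the forward difference `Δ_[a]`. Hence
`[H1, H2]` and `[H1, [H1, H2]]` are sums of two, resp. four, weighted shifts `D g * S c` whose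
weights are first, resp. second, differences of `d`, each multiplied by `n²`, resp. `n⁴`. A
weighted shift has spectral norm at most `sup |g|`, and by periodicity of `V` and the mean value
theorem the differences of the samples are bounded by `sup |V'| / n` and `sup |V''| / n²`.
The bound on `[H2, [H2, H1]]` is `‖[A, B]‖ ≤ 2 ‖A‖ ‖B‖` applied to the bound on `[H1, H2]`.
-/

open Function fwdDiff

lemma Function.Periodic.abs_le_iSup_Icc {f : ℝ → ℝ} {c : ℝ} (hf : Periodic f c) (hc : 0 < c)
    (hcont : Continuous f) (x : ℝ) : |f x| ≤ ⨆ y : Set.Icc 0 c, |f y| := by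
  obtain ⟨y, hy, hxy⟩ := hf.exists_mem_Ico₀ hc x
  have hbdd : BddAbove (Set.range fun y : Set.Icc 0 c => |f y|) := by
    simpa only [Set.image_eq_range] using isCompact_Icc.bddAbove_image hcont.abs.continuousOn
  rw [hxy]
  exact le_ciSup hbdd ⟨y, Set.Ico_subset_Icc_self hy⟩

lemma Function.Periodic.iteratedDeriv {f : ℝ → ℝ} {c : ℝ} (hf : Periodic f c) (k : ℕ) :
    Periodic (iteratedDeriv k f) c := fun x => by
  simpa [show (fun z => f (z + c)) = f from funext hf] using
    (congrFun (iteratedDeriv_comp_add_const k f c) x).symm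

lemma Function.Periodic.fwdDiff {M G : Type*} [AddCommMonoid M] [AddCommGroup G] {f : M → G}
    {c : M} (hf : Periodic f c) (h : M) : Periodic (Δ_[h] f) c := fun x => by
  rw [_root_.fwdDiff, _root_.fwdDiff, add_right_comm x c h, hf (x + h), hf x]

lemma Function.Periodic.fwdDiff_add_period {M G : Type*} [AddCommMonoid M] [AddCommGroup G]
    {f : M → G} {c : M} (hf : Periodic f c) (h : M) : Δ_[h + c] f = Δ_[h] f := by
  ext x
  rw [_root_.fwdDiff, _root_.fwdDiff, ← add_assoc, hf (x + h)]

lemma deriv_fwdDiff {𝕜 F : Type*} [NontriviallyNormedField 𝕜] [NormedAddCommGroup F]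
    [NormedSpace 𝕜 F] {f : 𝕜 → F} (hf : Differentiable 𝕜 f) (h : 𝕜) :
    deriv (Δ_[h] f) = Δ_[h] (deriv f) := by
  ext x
  change deriv (fun y => f (y + h) - f y) x = deriv f (x + h) - deriv f x
  rw [deriv_fun_sub (f := fun y => f (y + h)) (hf.comp (differentiable_id.add_const h) x) (hf x),
    deriv_comp_add_const]

lemma abs_fwdDiff_le {f : ℝ → ℝ} {C : ℝ} (hf : Differentiable ℝ f) (hC : ∀ x, |deriv f x| ≤ C)
    (x h : ℝ) : |Δ_[h] f x| ≤ C * |h| := by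
  simpa [fwdDiff] using Convex.norm_image_sub_le_of_norm_deriv_le (fun y _ => hf y)
    (fun y _ => hC y) convex_univ (Set.mem_univ x) (Set.mem_univ (x + h))

lemma abs_fwdDiff_fwdDiff_le {f : ℝ → ℝ} {C : ℝ} (hf : ContDiff ℝ 2 f)
    (hC : ∀ x, |iteratedDeriv 2 f x| ≤ C) (x s t : ℝ) : |Δ_[t] (Δ_[s] f) x| ≤ C * |s| * |t| := by
  have hd : Differentiable ℝ f := hf.differentiable two_ne_zero
  have hd' : Differentiable ℝ (deriv f) := by
    simpa using hf.differentiable_iteratedDeriv 1 (by norm_num)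
  have hΔ : Differentiable ℝ (Δ_[s] f) := (hd.comp (differentiable_id.add_const s)).sub hd
  refine abs_fwdDiff_le hΔ (fun y => ?_) x t
  rw [deriv_fwdDiff hd]
  exact abs_fwdDiff_le hd' (by simpa [iteratedDeriv_succ] using hC) y s

section NormedRing

variable {A : Type*} [NormedRing A]

lemma norm_lie_le (a b : A) : ‖⁅a, b⁆‖ ≤ 2 * ‖a‖ * ‖b‖ := by
  rw [Ring.lie_def]
  calc ‖a * b - b * a‖ ≤ ‖a‖ * ‖b‖ + ‖b‖ * ‖a‖ :=
        (norm_sub_le _ _).trans (add_le_add (norm_mul_le _ _) (norm_mul_le _ _))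
    _ = 2 * ‖a‖ * ‖b‖ := by ring

lemma norm_lie_comm (a b : A) : ‖⁅a, b⁆‖ = ‖⁅b, a⁆‖ := by
  rw [Ring.lie_def, Ring.lie_def, ← norm_neg, neg_sub]

end NormedRing

section ShiftMatrix

variable {G R : Type*} [AddCommGroup G] [DecidableEq G] [CommRing R]

variable (R) in
def shiftMatrix (a : G) : Matrix G G R := (Equiv.addRight a).permMatrix R

lemma shiftMatrix_apply (a x y : G) : shiftMatrix R a x y = if x + a = y then 1 else 0 := by
  simp [shiftMatrix, PEquiv.toMatrix_apply]

@[simp] lemma shiftMatrix_zero : shiftMatrix R (0 : G) = 1 := by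
  simp [shiftMatrix]

variable [Fintype G]

lemma shiftMatrix_mul_shiftMatrix (a b : G) :
    shiftMatrix R a * shiftMatrix R b = shiftMatrix R (a + b) := by
  rw [shiftMatrix, shiftMatrix, ← permMatrix_mul, shiftMatrix]
  congr 1
  ext x
  simp [add_assoc]

lemma shiftMatrix_mul_diagonal (a : G) (g : G → R) :
    shiftMatrix R a * diagonal g = diagonal (fun x => g (x + a)) * shiftMatrix R a := by
  ext x y
  simp only [mul_diagonal, diagonal_mul, shiftMatrix_apply]
  split_ifs with h <;> simp [h]

lemma lie_shiftMatrix_diagonal_mul_shiftMatrix (a b : G) (g : G → R) :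
    ⁅shiftMatrix R a, diagonal g * shiftMatrix R b⁆
      = diagonal (Δ_[a] g) * shiftMatrix R (a + b) := by
  rw [Ring.lie_def, ← mul_assoc, shiftMatrix_mul_diagonal, mul_assoc, mul_assoc,
    shiftMatrix_mul_shiftMatrix, shiftMatrix_mul_shiftMatrix, add_comm b, ← sub_mul, diagonal_sub]
  rfl

lemma lie_sum_one_sub_shiftMatrix (U : Finset G) (b : G) (g : G → R) :
    ⁅∑ a ∈ U, (1 - shiftMatrix R a), diagonal g * shiftMatrix R b⁆
      = -∑ a ∈ U, diagonal (Δ_[a] g) * shiftMatrix R (a + b) := by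
  simp only [← lie_shiftMatrix_diagonal_mul_shiftMatrix, Ring.lie_def, Finset.sum_mul,
    Finset.mul_sum, ← Finset.sum_sub_distrib, ← Finset.sum_neg_distrib]
  refine Finset.sum_congr rfl fun a _ => ?_
  noncomm_ring

variable {𝕜 : Type*} [RCLike 𝕜]

lemma norm_shiftMatrix_le (a : G) : ‖shiftMatrix 𝕜 a‖ ≤ 1 :=
  permMatrix_l2_opNorm_le _

lemma norm_one_sub_shiftMatrix_le (a : G) : ‖1 - shiftMatrix 𝕜 a‖ ≤ 2 :=
  (norm_sub_le _ _).trans (by rw [norm_one]; linarith [norm_shiftMatrix_le (𝕜 := 𝕜) a])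

lemma norm_diagonal_mul_shiftMatrix_le (g : G → 𝕜) (a : G) :
    ‖diagonal g * shiftMatrix 𝕜 a‖ ≤ ‖g‖ :=
  calc ‖diagonal g * shiftMatrix 𝕜 a‖ ≤ ‖g‖ * ‖shiftMatrix 𝕜 a‖ := by
        simpa using norm_mul_le (diagonal g) (shiftMatrix 𝕜 a)
    _ ≤ ‖g‖ := mul_le_of_le_one_right (norm_nonneg g) (norm_shiftMatrix_le a)

end ShiftMatrix

lemma Nat.add_one_mod_succ_eq_ite {k m : ℕ} (hk : k < m + 1) :
    (k + 1) % (m + 1) = if k = m then 0 else k + 1 := by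
  split_ifs with h
  · rw [h, Nat.mod_self]
  · exact Nat.mod_eq_of_lt (by omega)

lemma Nat.add_mod_succ_eq_ite {k m : ℕ} (hk : k < m + 1) :
    (k + m) % (m + 1) = if k = 0 then m else k - 1 := by
  split_ifs with h
  · rw [h, zero_add]
    exact Nat.mod_eq_of_lt (by omega)
  · rw [show k + m = k - 1 + (m + 1) by omega, Nat.add_mod_right]
    exact Nat.mod_eq_of_lt (by omega)

section FiniteDifference

variable {n : ℕ}

def fdSamples (n : ℕ) (f : ℝ → ℝ) : Fin n → ℂ := fun k => (f ((k : ℕ) / n) : ℂ)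

lemma fdH2_eq (V : ℝ → ℝ) : fdH2 n V = diagonal (fdSamples n V) := rfl

lemma norm_fdSamples_le {f : ℝ → ℝ} {C : ℝ} (hC : ∀ x, |f x| ≤ C) : ‖fdSamples n f‖ ≤ C :=
  (pi_norm_le_iff_of_nonneg ((abs_nonneg _).trans (hC 0))).2 fun k => by
    simpa [fdSamples] using hC _

theorem norm_fdH2_le {V : ℝ → ℝ} {C : ℝ} (hC : ∀ x, |V x| ≤ C) : ‖fdH2 n V‖ ≤ C := by
  rw [fdH2_eq, l2_opNorm_diagonal]
  exact norm_fdSamples_le hC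

variable [NeZero n]

lemma Fin.one_ne_neg_one_of_three_le (hn : 3 ≤ n) : (1 : Fin n) ≠ -1 := by
  obtain ⟨m, rfl⟩ : ∃ m, n = m + 1 := ⟨n - 1, by omega⟩
  simp [Fin.ext_iff, Fin.coe_neg_one, Nat.mod_eq_of_lt (show 1 < m + 1 by omega)]
  omega

lemma fdH1_eq (hn : 3 ≤ n) :
    fdH1 n = (n : ℂ) ^ 2 • ∑ a ∈ ({1, -1} : Finset (Fin n)), (1 - shiftMatrix ℂ a) := by
  rw [Finset.sum_pair (Fin.one_ne_neg_one_of_three_le hn)]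
  obtain ⟨m, rfl⟩ : ∃ m, n = m + 1 := ⟨n - 1, by omega⟩
  ext k l
  have hk := k.isLt
  simp only [fdH1, of_apply, Matrix.smul_apply, Matrix.add_apply, Matrix.sub_apply, one_apply,
    shiftMatrix_apply, Fin.ext_iff, Fin.val_add, Fin.coe_neg_one, Fin.val_one',
    Nat.mod_eq_of_lt (show 1 < m + 1 by omega), ← add_assoc, add_tsub_cancel_right,
    Nat.add_one_mod_succ_eq_ite hk, Nat.add_mod_succ_eq_ite hk, smul_eq_mul]
  split_ifs <;> first | (exfalso; omega) | ring

lemma fdD1_eq (hn : 2 ≤ n) : fdD1 n = -(n : ℂ) • (1 - shiftMatrix ℂ (-1)) := by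
  obtain ⟨m, rfl⟩ : ∃ m, n = m + 1 := ⟨n - 1, by omega⟩
  ext k l
  have hk := k.isLt
  simp only [fdD1, of_apply, Matrix.smul_apply, Matrix.sub_apply, one_apply, shiftMatrix_apply,
    Fin.ext_iff, Fin.val_add, Fin.coe_neg_one, ← add_assoc, add_tsub_cancel_right,
    Nat.add_mod_succ_eq_ite hk, smul_eq_mul]
  split_ifs <;> first | (exfalso; omega) | ring

theorem norm_fdH1_le (hn : 3 ≤ n) : ‖fdH1 n‖ ≤ 4 * (n : ℝ) ^ 2 := by
  rw [fdH1_eq hn, norm_smul, Finset.sum_pair (Fin.one_ne_neg_one_of_three_le hn), norm_pow,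
    Complex.norm_natCast]
  calc _ ≤ (n : ℝ) ^ 2 * (2 + 2) := by
        gcongr
        exact (norm_add_le _ _).trans
          (add_le_add (norm_one_sub_shiftMatrix_le _) (norm_one_sub_shiftMatrix_le _))
    _ = 4 * (n : ℝ) ^ 2 := by ring

theorem norm_fdD1_le (hn : 2 ≤ n) : ‖fdD1 n‖ ≤ 2 * (n : ℝ) := by
  rw [fdD1_eq hn, norm_smul, norm_neg, Complex.norm_natCast, mul_comm]
  gcongr
  exact norm_one_sub_shiftMatrix_le _

lemma lie_fdH1_diagonal_mul_shiftMatrix (hn : 3 ≤ n) (g : Fin n → ℂ) (b : Fin n) :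
    ⁅fdH1 n, diagonal g * shiftMatrix ℂ b⁆ = -((n : ℂ) ^ 2 •
      ∑ a ∈ ({1, -1} : Finset (Fin n)), diagonal (Δ_[a] g) * shiftMatrix ℂ (a + b)) := by
  rw [fdH1_eq hn, Ring.lie_def, smul_mul_assoc, mul_smul_comm, ← smul_sub, ← Ring.lie_def,
    lie_sum_one_sub_shiftMatrix, smul_neg]

lemma norm_lie_fdH1_diagonal_mul_shiftMatrix_le (hn : 3 ≤ n) (g : Fin n → ℂ) (b : Fin n)
    {C : ℝ} (hC : ∀ a ∈ ({1, -1} : Finset (Fin n)), ‖Δ_[a] g‖ ≤ C) :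
    ‖⁅fdH1 n, diagonal g * shiftMatrix ℂ b⁆‖ ≤ 2 * (n : ℝ) ^ 2 * C := by
  rw [lie_fdH1_diagonal_mul_shiftMatrix hn, norm_neg, norm_smul,
    Finset.sum_pair (Fin.one_ne_neg_one_of_three_le hn), norm_pow, Complex.norm_natCast]
  calc _ ≤ (n : ℝ) ^ 2 * (C + C) := by
        gcongr
        refine (norm_add_le _ _).trans (add_le_add ?_ ?_)
        · exact (norm_diagonal_mul_shiftMatrix_le _ _).trans (hC 1 (by simp))
        · exact (norm_diagonal_mul_shiftMatrix_le _ _).trans (hC (-1) (by simp))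
    _ = 2 * (n : ℝ) ^ 2 * C := by ring

lemma norm_lie_fdH1_diagonal_le (hn : 3 ≤ n) (g : Fin n → ℂ) {C : ℝ}
    (hC : ∀ a ∈ ({1, -1} : Finset (Fin n)), ‖Δ_[a] g‖ ≤ C) :
    ‖⁅fdH1 n, diagonal g⁆‖ ≤ 2 * (n : ℝ) ^ 2 * C := by
  simpa using norm_lie_fdH1_diagonal_mul_shiftMatrix_le hn g 0 hC

lemma norm_lie_fdH1_lie_fdH1_diagonal_le (hn : 3 ≤ n) (g : Fin n → ℂ) {C : ℝ}
    (hC : ∀ a ∈ ({1, -1} : Finset (Fin n)), ∀ b ∈ ({1, -1} : Finset (Fin n)),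
      ‖Δ_[a] (Δ_[b] g)‖ ≤ C) :
    ‖⁅fdH1 n, ⁅fdH1 n, diagonal g⁆⁆‖ ≤ 4 * (n : ℝ) ^ 4 * C := by
  have hlin : ∀ X,
      ⁅fdH1 n, X⁆ = (LinearMap.mulLeft ℂ (fdH1 n) - LinearMap.mulRight ℂ (fdH1 n)) X :=
    fun X => by simp [Ring.lie_def]
  have hinner := lie_fdH1_diagonal_mul_shiftMatrix hn g 0
  simp only [shiftMatrix_zero, mul_one, add_zero] at hinner
  rw [hinner, hlin, map_neg, map_smul, map_sum, norm_neg, norm_smul,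
    Finset.sum_pair (Fin.one_ne_neg_one_of_three_le hn), norm_pow, Complex.norm_natCast,
    ← hlin, ← hlin]
  calc _ ≤ (n : ℝ) ^ 2 * (2 * n ^ 2 * C + 2 * n ^ 2 * C) := by
        gcongr
        refine (norm_add_le _ _).trans (add_le_add ?_ ?_)
        · exact norm_lie_fdH1_diagonal_mul_shiftMatrix_le hn _ _ fun a ha => hC a ha 1 (by simp)
        · exact norm_lie_fdH1_diagonal_mul_shiftMatrix_le hn _ _ fun a ha =>
            hC a ha (-1) (by simp)
    _ = 4 * (n : ℝ) ^ 4 * C := by ring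

lemma fdSamples_add {f : ℝ → ℝ} (hf : Periodic f 1) (k a : Fin n) :
    fdSamples n f (k + a) = f ((k : ℕ) / n + (a : ℕ) / n) := by
  have hn : (n : ℝ) ≠ 0 := Nat.cast_ne_zero.2 (NeZero.ne n)
  obtain ⟨s, hs⟩ : ∃ s, s = (k : ℕ) + a := ⟨_, rfl⟩
  have hdiv : ((s % n : ℕ) : ℝ) + n * (s / n : ℕ) = (k : ℕ) + (a : ℕ) := by
    rw [← Nat.cast_add, ← hs]
    exact_mod_cast Nat.mod_add_div s n
  have harg : ((s % n : ℕ) : ℝ) / n = (k : ℕ) / n + (a : ℕ) / n - (s / n : ℕ) * 1 := by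
    field_simp
    linarith
  simp only [fdSamples, Fin.val_add, ← hs, harg, hf.sub_nat_mul_eq]

lemma fwdDiff_fdSamples {f : ℝ → ℝ} (hf : Periodic f 1) (a : Fin n) :
    Δ_[a] (fdSamples n f) = fdSamples n (Δ_[((a : ℕ) : ℝ) / n] f) := by
  ext k
  change fdSamples n f (k + a) - fdSamples n f k = _
  rw [fdSamples_add hf]
  simp [fdSamples, fwdDiff]

-- The value `n - 1` of `-1 : Fin n` is replaced by the representative `-1` modulo `n`.
lemma exists_fwdDiff_fdSamples_eq (hn : 2 ≤ n) {f : ℝ → ℝ} (hf : Periodic f 1) {a : Fin n}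
    (ha : a ∈ ({1, -1} : Finset (Fin n))) :
    ∃ t : ℝ, |t| = 1 / n ∧ Δ_[a] (fdSamples n f) = fdSamples n (Δ_[t] f) := by
  obtain ⟨m, rfl⟩ : ∃ m, n = m + 1 := ⟨n - 1, by omega⟩
  rw [fwdDiff_fdSamples hf]
  simp only [Finset.mem_insert, Finset.mem_singleton] at ha
  rcases ha with rfl | rfl
  · refine ⟨1 / (m + 1 : ℕ), abs_of_pos (by positivity), ?_⟩
    rw [Fin.val_one', Nat.mod_eq_of_lt (by omega), Nat.cast_one]
  · refine ⟨-1 / (m + 1 : ℕ), by rw [neg_div, abs_neg, abs_of_pos (by positivity)], ?_⟩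
    rw [Fin.coe_neg_one, ← hf.fwdDiff_add_period (-1 / _)]
    congr 2
    field_simp
    push_cast
    ring

lemma norm_fwdDiff_fdSamples_le (hn : 2 ≤ n) {f : ℝ → ℝ} {C : ℝ} (hf : Periodic f 1)
    (hd : Differentiable ℝ f) (hC : ∀ x, |deriv f x| ≤ C) {a : Fin n}
    (ha : a ∈ ({1, -1} : Finset (Fin n))) : ‖Δ_[a] (fdSamples n f)‖ ≤ C / n := by
  obtain ⟨t, ht, heq⟩ := exists_fwdDiff_fdSamples_eq hn hf ha
  rw [heq]
  exact norm_fdSamples_le fun x => (abs_fwdDiff_le hd hC x t).trans_eq (by rw [ht]; ring)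

lemma norm_fwdDiff_fwdDiff_fdSamples_le (hn : 2 ≤ n) {f : ℝ → ℝ} {C : ℝ} (hf : Periodic f 1)
    (hf2 : ContDiff ℝ 2 f) (hC : ∀ x, |iteratedDeriv 2 f x| ≤ C) {a b : Fin n}
    (ha : a ∈ ({1, -1} : Finset (Fin n))) (hb : b ∈ ({1, -1} : Finset (Fin n))) :
    ‖Δ_[a] (Δ_[b] (fdSamples n f))‖ ≤ C / n ^ 2 := by
  obtain ⟨t, ht, hbeq⟩ := exists_fwdDiff_fdSamples_eq hn hf hb
  obtain ⟨s, hs, haeq⟩ := exists_fwdDiff_fdSamples_eq hn (hf.fwdDiff t) ha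
  rw [hbeq, haeq]
  exact norm_fdSamples_le fun x =>
    (abs_fwdDiff_fwdDiff_le hf2 hC x t s).trans_eq (by rw [ht, hs]; ring)

end FiniteDifference

theorem norm_lie_fdH1_fdH2_le {n : ℕ} (hn : 3 ≤ n) {V : ℝ → ℝ} {C : ℝ} (hV : Periodic V 1)
    (hd : Differentiable ℝ V) (hC : ∀ x, |deriv V x| ≤ C) :
    ‖⁅fdH1 n, fdH2 n V⁆‖ ≤ 2 * n * C := by
  have : NeZero n := ⟨by omega⟩
  have hn0 : (n : ℝ) ≠ 0 := by positivity
  calc _ ≤ 2 * (n : ℝ) ^ 2 * (C / n) := norm_lie_fdH1_diagonal_le hn _ fun a ha =>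
        norm_fwdDiff_fdSamples_le (by omega) hV hd hC ha
    _ = 2 * n * C := by field_simp

theorem norm_lie_fdH1_lie_fdH1_fdH2_le {n : ℕ} (hn : 3 ≤ n) {V : ℝ → ℝ} {C : ℝ}
    (hV : Periodic V 1) (hV2 : ContDiff ℝ 2 V) (hC : ∀ x, |iteratedDeriv 2 V x| ≤ C) :
    ‖⁅fdH1 n, ⁅fdH1 n, fdH2 n V⁆⁆‖ ≤ 4 * n ^ 2 * C := by
  have : NeZero n := ⟨by omega⟩
  have hn0 : (n : ℝ) ≠ 0 := by positivity
  calc _ ≤ 4 * (n : ℝ) ^ 4 * (C / n ^ 2) :=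
        norm_lie_fdH1_lie_fdH1_diagonal_le hn _ fun a ha b hb =>
          norm_fwdDiff_fwdDiff_fdSamples_le (by omega) hV hV2 hC ha hb
    _ = 4 * n ^ 2 * C := by field_simp

lemma matComm_eq_lie {n : ℕ} (A B : Mat n) : matComm A B = ⁅A, B⁆ := (Ring.lie_def A B).symm

/-- **Norm scalings of the finite-difference Hamiltonians and their commutators** with
respect to the spectral (operator 2-) norm. -/
theorem finite_difference_norm_scalings
    (n : ℕ) (hn : 3 ≤ n) (V : ℝ → ℝ)
    (hVper : Function.Periodic V 1) (hV : ContDiff ℝ 2 V) :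
    ‖fdH1 n‖ ≤ 4 * (n : ℝ)^2 ∧
    ‖fdD1 n‖ ≤ 2 * (n : ℝ) ∧
    ‖fdH2 n V‖ ≤ (⨆ x : Set.Icc (0:ℝ) 1, |V x|) ∧
    ‖matComm (fdH1 n) (fdH2 n V)‖ ≤ 2 * (n : ℝ) * (⨆ x : Set.Icc (0:ℝ) 1, |deriv V x|) ∧
    ‖matComm (fdH2 n V) (matComm (fdH2 n V) (fdH1 n))‖ ≤
      4 * (n : ℝ) * (⨆ x : Set.Icc (0:ℝ) 1, |V x|) * (⨆ x : Set.Icc (0:ℝ) 1, |deriv V x|) ∧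
    ‖matComm (fdH1 n) (matComm (fdH1 n) (fdH2 n V))‖ ≤
      4 * (n : ℝ)^2 * (⨆ x : Set.Icc (0:ℝ) 1, |iteratedDeriv 2 V x|) := by
  have : NeZero n := ⟨by omega⟩
  set M₀ := ⨆ x : Set.Icc (0:ℝ) 1, |V x|
  set M₁ := ⨆ x : Set.Icc (0:ℝ) 1, |deriv V x|
  have hV₀ : ∀ x, |V x| ≤ M₀ := hVper.abs_le_iSup_Icc one_pos hV.continuous
  have hV₁ : ∀ x, |deriv V x| ≤ M₁ := by
    simpa using (hVper.iteratedDeriv 1).abs_le_iSup_Icc one_pos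
      (hV.continuous_iteratedDeriv 1 (by norm_num))
  have hV₂ := (hVper.iteratedDeriv 2).abs_le_iSup_Icc one_pos (hV.continuous_iteratedDeriv 2 le_rfl)
  have hH2 : ‖fdH2 n V‖ ≤ M₀ := norm_fdH2_le hV₀
  have hH1H2 := norm_lie_fdH1_fdH2_le hn hVper (hV.differentiable two_ne_zero) hV₁
  simp only [matComm_eq_lie]
  refine ⟨norm_fdH1_le hn, norm_fdD1_le (by omega), hH2, hH1H2, ?_,
    norm_lie_fdH1_lie_fdH1_fdH2_le hn hVper hV hV₂⟩
  calc _ ≤ 2 * ‖fdH2 n V‖ * ‖⁅fdH2 n V, fdH1 n⁆‖ := norm_lie_le _ _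
    _ = 2 * ‖fdH2 n V‖ * ‖⁅fdH1 n, fdH2 n V⁆‖ := by rw [norm_lie_comm]
    _ ≤ 2 * M₀ * (2 * n * M₁) := by
        have := (norm_nonneg _).trans hH2
        gcongr
    _ = 4 * n * M₀ * M₁ := by ring
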